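/- arXiv:1909.13384 — 3 statements merged into one kernel-verified Lean document; each statement's English description precedes it below -/
import Mathlib

section
/- Let A = A₁ ⊗ ⋯ ⊗ A_q with A_i ∈ ℝ^{n_i×d_i} each of full column rank. Then for any row index (i₁,...,i_q), the leverage score of that row of A equals the product over j of the leverage score of row i_j of A_j. -/
/-! The Kronecker product of a family of matrices is multiplicative and commutes with
transposition and inversion, so the hat matrix `A (AᵀA)⁻¹ Aᵀ` of `A = ⊗ᵢ Aᵢ` is the Kronecker
product of the hat matrices of the `Aᵢ`; a diagonal entry of a Kronecker product is the product
of the corresponding diagonal entries of the factors. -/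

open Matrix

/-- The Kronecker product of a family of `q` matrices, with rows and columns indexed by
tuples of indices. -/
def kronFamily {q : ℕ} {n d : Fin q → ℕ}
    (A : ∀ i : Fin q, Matrix (Fin (n i)) (Fin (d i)) ℝ) :
    Matrix (∀ i : Fin q, Fin (n i)) (∀ i : Fin q, Fin (d i)) ℝ :=
  fun r c => ∏ i : Fin q, A i (r i) (c i)

/-- The leverage score of row `i` of a (full column rank) matrix `M`:
`σ_i(M) = eᵢᵀ M (MᵀM)⁻¹ Mᵀ eᵢ`. -/
noncomputable def leverageScore {n d : Type*} [Fintype n] [Fintype d] [DecidableEq n]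
    [DecidableEq d] (M : Matrix n d ℝ) (i : n) : ℝ :=
  (M * (Mᵀ * M)⁻¹ * Mᵀ) i i

namespace Matrix

theorem isUnit_of_rank_eq_card {m K : Type*} [Fintype m] [DecidableEq m] [Field K]
    {M : Matrix m m K} (h : M.rank = Fintype.card m) : IsUnit M := by
  rw [← mulVec_surjective_iff_isUnit, ← coe_mulVecLin, ← LinearMap.range_eq_top]
  apply Submodule.eq_top_of_finrank_eq
  rw [Module.finrank_fintype_fun_eq_card]
  exact h

theorem isUnit_transpose_mul_self_of_rank_eq_card {m n K : Type*} [Fintype m] [Fintype n]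
    [DecidableEq n] [Field K] [LinearOrder K] [IsStrictOrderedRing K] {A : Matrix m n K}
    (h : A.rank = Fintype.card n) : IsUnit (Aᵀ * A) :=
  isUnit_of_rank_eq_card (by rw [rank_transpose_mul_self, h])

end Matrix

section PiKron

variable {ι R : Type*} [Fintype ι] [CommRing R] {α β γ : ι → Type*}

def piKron (A : ∀ i, Matrix (α i) (β i) R) : Matrix (∀ i, α i) (∀ i, β i) R :=
  fun r c => ∏ i, A i (r i) (c i)

theorem piKron_mul [DecidableEq ι] [∀ i, Fintype (β i)] (A : ∀ i, Matrix (α i) (β i) R)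
    (B : ∀ i, Matrix (β i) (γ i) R) : piKron A * piKron B = piKron fun i => A i * B i := by
  ext r c
  simp only [mul_apply, piKron, ← Finset.prod_mul_distrib]
  rw [Finset.prod_univ_sum, ← Fintype.piFinset_univ]

theorem piKron_transpose (A : ∀ i, Matrix (α i) (β i) R) :
    (piKron A)ᵀ = piKron fun i => (A i)ᵀ :=
  rfl

theorem piKron_one [∀ i, DecidableEq (β i)] :
    piKron (fun i => (1 : Matrix (β i) (β i) R)) = 1 := by
  ext b c
  simp [piKron, one_apply, funext_iff, Fintype.prod_boole]

theorem piKron_inv [DecidableEq ι] [∀ i, Fintype (β i)] [∀ i, DecidableEq (β i)]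
    {G : ∀ i, Matrix (β i) (β i) R} (hG : ∀ i, IsUnit (G i)) :
    (piKron G)⁻¹ = piKron fun i => (G i)⁻¹ := by
  apply inv_eq_right_inv
  rw [piKron_mul, ← piKron_one]
  congr with i : 1
  exact mul_nonsing_inv _ ((isUnit_iff_isUnit_det _).mp (hG i))

theorem piKron_mul_inv_transpose_mul_self_mul_transpose [DecidableEq ι]
    [∀ i, Fintype (α i)] [∀ i, Fintype (β i)] [∀ i, DecidableEq (β i)]
    {A : ∀ i, Matrix (α i) (β i) R} (hA : ∀ i, IsUnit ((A i)ᵀ * A i)) :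
    piKron A * ((piKron A)ᵀ * piKron A)⁻¹ * (piKron A)ᵀ =
      piKron fun i => A i * ((A i)ᵀ * A i)⁻¹ * (A i)ᵀ := by
  rw [piKron_transpose, piKron_mul, piKron_inv hA, piKron_mul, piKron_mul]

end PiKron

theorem leverageScore_piKron {ι : Type*} [Fintype ι] [DecidableEq ι] {α β : ι → Type*}
    [∀ i, Fintype (α i)] [∀ i, Fintype (β i)] [∀ i, DecidableEq (α i)] [∀ i, DecidableEq (β i)]
    {A : ∀ i, Matrix (α i) (β i) ℝ} (hA : ∀ i, (A i).rank = Fintype.card (β i)) (r : ∀ i, α i) :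
    leverageScore (piKron A) r = ∏ i, leverageScore (A i) (r i) := by
  rw [leverageScore, piKron_mul_inv_transpose_mul_self_mul_transpose fun i =>
    isUnit_transpose_mul_self_of_rank_eq_card (hA i)]
  rfl

/-- For `A = A₁ ⊗ ⋯ ⊗ A_q` with each `Aᵢ` of full column rank, the leverage score of the row of
`A` indexed by `(i₁, …, i_q)` is the product of the leverage scores of the rows `i_j` of `A_j`. -/
theorem stmt_3 (q : ℕ) (n d : Fin q → ℕ)
    (A : ∀ i : Fin q, Matrix (Fin (n i)) (Fin (d i)) ℝ)
    (hrank : ∀ i : Fin q, (A i).rank = d i)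
    (r : ∀ i : Fin q, Fin (n i)) :
    leverageScore (kronFamily A) r = ∏ i : Fin q, leverageScore (A i) (r i) :=
  leverageScore_piKron (fun i => (hrank i).trans (Fintype.card_fin _).symm) r
end

section
/- Let 1 ≤ p, and suppose U₁ ∈ ℝ^{n₁×d₁} satisfies α₁‖x‖_p ≤ ‖U₁x‖_p ≤ β₁‖x‖_p for all x ∈ ℝ^{d₁}, and U₂ ∈ ℝ^{n₂×d₂} satisfies α₂‖x‖_p ≤ ‖U₂x‖_p ≤ β₂‖x‖_p for all x ∈ ℝ^{d₂}. Then for all x ∈ ℝ^{d₁d₂}, α₁α₂‖x‖_p ≤ ‖(U₁ ⊗ U₂)x‖_p ≤ β₁β₂‖x‖_p. -/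
/-!
Write `x ∈ ℝ^{d₁ × d₂}` as a `d₁ × d₂` array. Then `(U₁ ⊗ U₂) x` is obtained by applying `U₂`
to every row and then `U₁` to every column. The `ℓ_p` norm of an array is the `ℓ_p` norm of its
vector of row (or column) norms, so applying an `(α, β)`-conditioned map to every row (or column)
is again `(α, β)`-conditioned, and the constants multiply under composition.
-/

open Matrix Kronecker

noncomputable def lpNorm {ι : Type*} [Fintype ι] (p : ℝ) (v : ι → ℝ) : ℝ :=
  (∑ i, |v i| ^ p) ^ (1 / p)

open Function

section LpNorm

variable {ι κ : Type*} [Fintype ι] [Fintype κ] {p : ℝ}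

lemma lpNorm_nonneg (p : ℝ) (v : ι → ℝ) : 0 ≤ lpNorm p v := by
  unfold lpNorm
  positivity

lemma lpNorm_smul_of_nonneg (hp : p ≠ 0) {c : ℝ} (hc : 0 ≤ c) (v : ι → ℝ) :
    lpNorm p (c • v) = c * lpNorm p v := by
  simp only [lpNorm, Pi.smul_apply, smul_eq_mul, abs_mul, abs_of_nonneg hc,
    Real.mul_rpow hc (abs_nonneg _), ← Finset.mul_sum]
  rw [Real.mul_rpow (by positivity) (by positivity), ← Real.rpow_mul hc,
    mul_one_div_cancel hp, Real.rpow_one]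

lemma lpNorm_le_lpNorm (hp : 0 ≤ p) {v w : ι → ℝ} (h : ∀ i, |v i| ≤ |w i|) :
    lpNorm p v ≤ lpNorm p w :=
  Real.rpow_le_rpow (by positivity)
    (Finset.sum_le_sum fun i _ => Real.rpow_le_rpow (abs_nonneg _) (h i) hp) (by positivity)

lemma lpNorm_comp_equiv (e : κ ≃ ι) (v : ι → ℝ) : lpNorm p (v ∘ e) = lpNorm p v := by
  simp only [lpNorm, Function.comp_apply]
  exact congrArg (· ^ (1 / p)) (e.sum_comp fun i => |v i| ^ p)

lemma lpNorm_comp_swap (v : ι × κ → ℝ) : lpNorm p (v ∘ Prod.swap) = lpNorm p v :=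
  lpNorm_comp_equiv (Equiv.prodComm κ ι) v

lemma lpNorm_rpow (hp : p ≠ 0) (v : ι → ℝ) : lpNorm p v ^ p = ∑ i, |v i| ^ p := by
  rw [lpNorm, ← Real.rpow_mul (by positivity), one_div_mul_cancel hp, Real.rpow_one]

lemma lpNorm_eq_lpNorm_lpNorm_curry (hp : p ≠ 0) (v : ι × κ → ℝ) :
    lpNorm p v = lpNorm p fun i => lpNorm p (curry v i) := by
  rw [lpNorm.eq_1 p v, lpNorm.eq_1 p fun i => lpNorm p (curry v i), Fintype.sum_prod_type]
  simp only [abs_of_nonneg (lpNorm_nonneg _ _), lpNorm_rpow hp, curry_apply]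

lemma lpNorm_le_lpNorm_of_curry {κ' : Type*} [Fintype κ'] (hp : 0 < p) {f : ι × κ → ℝ}
    {g : ι × κ' → ℝ} (h : ∀ i, lpNorm p (curry f i) ≤ lpNorm p (curry g i)) :
    lpNorm p f ≤ lpNorm p g := by
  rw [lpNorm_eq_lpNorm_lpNorm_curry hp.ne' f, lpNorm_eq_lpNorm_lpNorm_curry hp.ne' g]
  refine lpNorm_le_lpNorm hp.le fun i => ?_
  simpa only [abs_of_nonneg (lpNorm_nonneg _ _)] using h i

end LpNorm

section Conditioned

variable {ι κ κ' κ'' : Type*} [Fintype ι] [Fintype κ] [Fintype κ'] [Fintype κ'']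

def IsLpConditioned (p α β : ℝ) (T : (κ → ℝ) → κ' → ℝ) : Prop :=
  ∀ x, α * lpNorm p x ≤ lpNorm p (T x) ∧ lpNorm p (T x) ≤ β * lpNorm p x

def rowMap {R S : Type*} (T : (κ → R) → κ' → S) (f : ι × κ → R) : ι × κ' → S :=
  uncurry fun i => T (curry f i)

def colMap {R S : Type*} (T : (κ → R) → κ' → S) (f : κ × ι → R) : κ' × ι → S :=
  rowMap T (f ∘ Prod.swap) ∘ Prod.swap

variable {p α β α' β' : ℝ}

lemma IsLpConditioned.comp {T : (κ → ℝ) → κ' → ℝ} {S : (κ' → ℝ) → κ'' → ℝ}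
    (hα' : 0 ≤ α') (hβ' : 0 ≤ β') (hS : IsLpConditioned p α' β' S)
    (hT : IsLpConditioned p α β T) : IsLpConditioned p (α' * α) (β' * β) (S ∘ T) := by
  intro x
  obtain ⟨hT_lower, hT_upper⟩ := hT x
  obtain ⟨hS_lower, hS_upper⟩ := hS (T x)
  constructor
  · calc α' * α * lpNorm p x = α' * (α * lpNorm p x) := mul_assoc _ _ _
      _ ≤ α' * lpNorm p (T x) := mul_le_mul_of_nonneg_left hT_lower hα'
      _ ≤ lpNorm p (S (T x)) := hS_lower
  · calc lpNorm p (S (T x)) ≤ β' * lpNorm p (T x) := hS_upper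
      _ ≤ β' * (β * lpNorm p x) := mul_le_mul_of_nonneg_left hT_upper hβ'
      _ = β' * β * lpNorm p x := (mul_assoc _ _ _).symm

lemma IsLpConditioned.rowMap {T : (κ → ℝ) → κ' → ℝ} (hp : 0 < p) (hα : 0 ≤ α) (hβ : 0 ≤ β)
    (hT : IsLpConditioned p α β T) : IsLpConditioned p α β (rowMap (ι := ι) T) := by
  intro f
  constructor
  · rw [← lpNorm_smul_of_nonneg hp.ne' hα f]
    refine lpNorm_le_lpNorm_of_curry hp fun i => ?_
    have hrow := (hT (curry f i)).1
    rwa [← lpNorm_smul_of_nonneg hp.ne' hα] at hrow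
  · rw [← lpNorm_smul_of_nonneg hp.ne' hβ f]
    refine lpNorm_le_lpNorm_of_curry hp fun i => ?_
    have hrow := (hT (curry f i)).2
    rwa [← lpNorm_smul_of_nonneg hp.ne' hβ] at hrow

lemma IsLpConditioned.colMap {T : (κ → ℝ) → κ' → ℝ} (hp : 0 < p) (hα : 0 ≤ α) (hβ : 0 ≤ β)
    (hT : IsLpConditioned p α β T) : IsLpConditioned p α β (colMap (ι := ι) T) := by
  intro f
  rw [_root_.colMap, lpNorm_comp_swap, ← lpNorm_comp_swap f]
  exact hT.rowMap hp hα hβ _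

end Conditioned

lemma kronecker_mulVec {R m₁ n₁ m₂ n₂ : Type*} [CommSemiring R] [Fintype n₁] [Fintype n₂]
    (A : Matrix m₁ n₁ R) (B : Matrix m₂ n₂ R) (x : n₁ × n₂ → R) :
    (A ⊗ₖ B) *ᵥ x = colMap (A *ᵥ ·) (rowMap (B *ᵥ ·) x) := by
  ext ⟨i₁, i₂⟩
  simp only [colMap, rowMap, Function.comp_apply, Prod.swap_prod_mk, uncurry_apply_pair,
    curry_apply, mulVec, dotProduct, kroneckerMap_apply, Fintype.sum_prod_type, Finset.mul_sum,
    mul_assoc]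

/-- If `U₁` is an `(ℓ_p, α₁, β₁)`-conditioned matrix and `U₂` is `(ℓ_p, α₂, β₂)`-conditioned,
then `U₁ ⊗ U₂` is `(ℓ_p, α₁α₂, β₁β₂)`-conditioned. -/
theorem stmt_5 (n₁ d₁ n₂ d₂ : ℕ) (p : ℝ) (hp : 1 ≤ p)
    (U₁ : Matrix (Fin n₁) (Fin d₁) ℝ) (U₂ : Matrix (Fin n₂) (Fin d₂) ℝ)
    (α₁ β₁ α₂ β₂ : ℝ) (hα₁ : 0 < α₁) (hα₂ : 0 < α₂)
    (hαβ₁ : α₁ ≤ β₁) (hαβ₂ : α₂ ≤ β₂)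
    (h₁ : ∀ x : Fin d₁ → ℝ, α₁ * lpNorm p x ≤ lpNorm p (U₁.mulVec x) ∧
      lpNorm p (U₁.mulVec x) ≤ β₁ * lpNorm p x)
    (h₂ : ∀ x : Fin d₂ → ℝ, α₂ * lpNorm p x ≤ lpNorm p (U₂.mulVec x) ∧
      lpNorm p (U₂.mulVec x) ≤ β₂ * lpNorm p x) :
    ∀ x : Fin d₁ × Fin d₂ → ℝ,
      α₁ * α₂ * lpNorm p x ≤ lpNorm p ((U₁ ⊗ₖ U₂).mulVec x) ∧
      lpNorm p ((U₁ ⊗ₖ U₂).mulVec x) ≤ β₁ * β₂ * lpNorm p x := by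
  intro x
  have hp : 0 < p := one_pos.trans_le hp
  have hβ₁ : 0 ≤ β₁ := hα₁.le.trans hαβ₁
  have hβ₂ : 0 ≤ β₂ := hα₂.le.trans hαβ₂
  have hcol : IsLpConditioned p α₁ β₁ (colMap (ι := Fin n₂) (U₁ *ᵥ ·)) :=
    IsLpConditioned.colMap hp hα₁.le hβ₁ h₁
  have hrow : IsLpConditioned p α₂ β₂ (rowMap (ι := Fin d₁) (U₂ *ᵥ ·)) :=
    IsLpConditioned.rowMap hp hα₂.le hβ₂ h₂
  rw [kronecker_mulVec]
  exact hcol.comp hα₁.le hβ₁ hrow x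
end

section
/- Let S ∈ ℝ^{k×n} be a count-sketch matrix (one ±1 entry in a uniform row per column, independent across columns). Then for every fixed unit vector x ∈ ℝ^n, E[‖Sx‖₂⁴] ≤ 1 + C/k for an absolute constant C (one may take C = 4 with 4-wise independent hashes, or under full independence). -/
open MeasureTheory ProbabilityTheory

noncomputable def signMeasure : Measure ℝ :=
  (2 : ENNReal)⁻¹ • (Measure.dirac (1 : ℝ) + Measure.dirac (-1 : ℝ))

namespace CS15

instance signMeasure_prob : IsProbabilityMeasure signMeasure := by
  constructor
  simp only [signMeasure, Measure.smul_apply, Measure.add_apply, measure_univ, smul_eq_mul]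
  rw [one_add_one_eq_two, ENNReal.inv_mul_cancel (by norm_num) (by norm_num)]

lemma sign_integrable (g : ℝ → ℝ) : Integrable g signMeasure := by
  unfold signMeasure
  refine Integrable.smul_measure ?_ (by norm_num)
  refine Integrable.add_measure ?_ ?_ <;>
    exact (integrable_const _).congr (ae_eq_dirac g).symm

lemma sign_integral (g : ℝ → ℝ) : ∫ s, g s ∂signMeasure = (g 1 + g (-1)) / 2 := by
  rw [signMeasure, integral_smul_measure,
    integral_add_measure ((integrable_const _).congr (ae_eq_dirac g).symm)
      ((integrable_const _).congr (ae_eq_dirac g).symm),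
    integral_dirac, integral_dirac]
  simp only [smul_eq_mul]
  rw [ENNReal.toReal_inv]
  norm_num
  ring

variable {k : ℕ} [Nonempty (Fin k)]

noncomputable def mU (k : ℕ) [Nonempty (Fin k)] : Measure (Fin k) :=
  (PMF.uniformOfFintype (Fin k)).toMeasure

instance : IsProbabilityMeasure (mU k) := PMF.toMeasure.isProbabilityMeasure _

lemma mU_integral (g : Fin k → ℝ) : ∫ h, g h ∂(mU k) = ∑ j, (k : ℝ)⁻¹ * g j := by
  rw [integral_fintype (Integrable.of_finite)]
  refine Finset.sum_congr rfl fun j _ => ?_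
  rw [Measure.real, mU, PMF.toMeasure_apply_singleton _ _ (measurableSet_singleton j)]
  simp [PMF.uniformOfFintype_apply, ENNReal.toReal_inv]

noncomputable def nu (k : ℕ) [Nonempty (Fin k)] : Measure (Fin k × ℝ) :=
  (mU k).prod signMeasure

instance : IsProbabilityMeasure (nu k) := by unfold nu; infer_instance

def u (j : Fin k) (a : Fin k × ℝ) : ℝ := if a.1 = j then a.2 else 0

lemma u_eq (j : Fin k) (a : Fin k × ℝ) :
    u j a = (if a.1 = j then (1:ℝ) else 0) * a.2 := by
  by_cases h : a.1 = j <;> simp [u, h]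

lemma measurable_u (j : Fin k) : Measurable (u j) := by
  unfold u
  exact Measurable.ite (measurable_fst (measurableSet_singleton j)) measurable_snd
    measurable_const

lemma integrable_u (j : Fin k) : Integrable (u j) (nu k) := by
  simp_rw [funext (u_eq j)]
  exact Integrable.mul_prod
    (f := fun h : Fin k => if h = j then (1:ℝ) else 0) (g := fun s : ℝ => s)
    Integrable.of_finite (sign_integrable _)

lemma integrable_uu (j1 j2 : Fin k) :
    Integrable (fun a => u j1 a * u j2 a) (nu k) := by
  have h : (fun a : Fin k × ℝ => u j1 a * u j2 a)
      = fun a => ((if a.1 = j1 then (1:ℝ) else 0) * (if a.1 = j2 then (1:ℝ) else 0))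
          * (a.2 * a.2) := by
    funext a; rw [u_eq, u_eq]; ring
  rw [h]
  exact Integrable.mul_prod
    (f := fun h : Fin k => (if h = j1 then (1:ℝ) else 0) * (if h = j2 then (1:ℝ) else 0))
    (g := fun s : ℝ => s * s)
    Integrable.of_finite (sign_integrable _)

lemma nu_integral_u (j : Fin k) : ∫ a, u j a ∂(nu k) = 0 := by
  simp_rw [funext (u_eq j)]
  rw [nu]
  rw [integral_prod_mul (f := fun h : Fin k => if h = j then (1:ℝ) else 0)
    (g := fun s : ℝ => s), sign_integral (fun s => s)]
  simp

lemma nu_integral_uu (j1 j2 : Fin k) :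
    ∫ a, u j1 a * u j2 a ∂(nu k) = if j1 = j2 then (k : ℝ)⁻¹ else 0 := by
  have h : (fun a : Fin k × ℝ => u j1 a * u j2 a)
      = fun a => ((if a.1 = j1 then (1:ℝ) else 0) * (if a.1 = j2 then (1:ℝ) else 0))
          * (a.2 * a.2) := by
    funext a; rw [u_eq, u_eq]; ring
  rw [h, nu]
  rw [integral_prod_mul
    (f := fun h : Fin k => (if h = j1 then (1:ℝ) else 0) * (if h = j2 then (1:ℝ) else 0))
    (g := fun s : ℝ => s * s), sign_integral (fun s => s * s)]
  rw [mU_integral]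
  norm_num
  by_cases hj : j1 = j2 <;> simp [hj, eq_comm]

lemma nu_bad : nu k {a : Fin k × ℝ | ¬ (a.2 * a.2 = 1)} = 0 := by
  have h : {a : Fin k × ℝ | ¬ (a.2 * a.2 = 1)}
      = Set.univ ×ˢ {s : ℝ | ¬ (s * s = 1)} := by
    ext ⟨h', s⟩; simp
  rw [nu, h, Measure.prod_prod]
  have h2 : signMeasure {s : ℝ | ¬ (s * s = 1)} = 0 := by
    rw [signMeasure]
    simp only [Measure.smul_apply, Measure.add_apply, Measure.dirac_apply, smul_eq_mul]
    norm_num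
  rw [h2, mul_zero]

-- ================== new material ==================
variable {n : ℕ}

noncomputable abbrev Pm (k n : ℕ) [Nonempty (Fin k)] : Measure (Fin n → Fin k × ℝ) :=
  Measure.pi fun _ => nu k

instance : IsProbabilityMeasure (Pm k n) := by
  unfold Pm; infer_instance

lemma pi_integral_prod (g : Fin n → (Fin k × ℝ) → ℝ) :
    ∫ y, ∏ m, g m (y m) ∂(Pm k n) = ∏ m, ∫ a, g m a ∂(nu k) := by
  letI : MeasureSpace (Fin k × ℝ) := ⟨nu k⟩
  haveI : IsProbabilityMeasure (volume : Measure (Fin k × ℝ)) :=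
    (inferInstance : IsProbabilityMeasure (nu k))
  exact integral_fintype_prod_eq_prod g

lemma pi_integrable_prod (g : Fin n → (Fin k × ℝ) → ℝ)
    (hg : ∀ m, Integrable (g m) (nu k)) :
    Integrable (fun y => ∏ m, g m (y m)) (Pm k n) := by
  letI : MeasureSpace (Fin k × ℝ) := ⟨nu k⟩
  haveI : IsProbabilityMeasure (volume : Measure (Fin k × ℝ)) :=
    (inferInstance : IsProbabilityMeasure (nu k))
  exact Integrable.fintype_prod hg

lemma prod_ite_two (c d : Fin n) (φ ψ : Fin n → ℝ) :
    ∏ m, ((if m = c then φ m else 1) * (if m = d then ψ m else 1)) = φ c * ψ d := by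
  rw [Finset.prod_mul_distrib, Finset.prod_ite_eq', Finset.prod_ite_eq']
  simp


lemma prod_ite_pair (c d : Fin n) (hcd : c ≠ d) (A B : ℝ) :
    ∏ m, (if m = c then A else if m = d then B else 1) = A * B := by
  have h : ∀ m : Fin n, (if m = c then A else if m = d then B else 1)
      = (if m = c then A else 1) * (if m = d then B else 1) := by
    intro m
    by_cases h1 : m = c
    · subst h1; simp [hcd]
    · by_cases h2 : m = d <;> simp [h1, h2, Ne.symm hcd]
  rw [Finset.prod_congr rfl fun m _ => h m, Finset.prod_mul_distrib,
    Finset.prod_ite_eq', Finset.prod_ite_eq']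
  simp

def Wf (p : Fin n × Fin n) (y : Fin n → Fin k × ℝ) : ℝ :=
  ∑ j, u j (y p.1) * u j (y p.2)

def g2 (p : Fin n × Fin n) (j : Fin k) (m : Fin n) (a : Fin k × ℝ) : ℝ :=
  (if m = p.1 then u j a else 1) * (if m = p.2 then u j a else 1)

def g4 (p q : Fin n × Fin n) (j1 j2 : Fin k) (m : Fin n) (a : Fin k × ℝ) : ℝ :=
  g2 p j1 m a * g2 q j2 m a

lemma g2_prod (p : Fin n × Fin n) (j : Fin k) (y : Fin n → Fin k × ℝ) :
    ∏ m, g2 p j m (y m) = u j (y p.1) * u j (y p.2) :=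
  prod_ite_two p.1 p.2 (fun m => u j (y m)) (fun m => u j (y m))

lemma g4_prod (p q : Fin n × Fin n) (j1 j2 : Fin k) (y : Fin n → Fin k × ℝ) :
    ∏ m, g4 p q j1 j2 m (y m)
      = (u j1 (y p.1) * u j1 (y p.2)) * (u j2 (y q.1) * u j2 (y q.2)) := by
  unfold g4
  rw [Finset.prod_mul_distrib, g2_prod, g2_prod]

lemma integrable_dom : Integrable (fun a : Fin k × ℝ => (1 + |a.2|)^4) (nu k) := by
  have h : (fun a : Fin k × ℝ => (1 + |a.2|)^4)
      = fun a : Fin k × ℝ => (fun _ : Fin k => (1:ℝ)) a.1 * (fun s : ℝ => (1 + |s|)^4) a.2 := by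
    funext a; simp
  rw [h]
  exact Integrable.mul_prod (f := fun _ : Fin k => (1:ℝ)) (g := fun s : ℝ => (1 + |s|)^4)
    Integrable.of_finite (sign_integrable _)

lemma measurable_ite_u (c : Prop) [Decidable c] (j : Fin k) :
    Measurable (fun a : Fin k × ℝ => if c then u j a else 1) := by
  by_cases h : c
  · simp only [h, if_true]; exact measurable_u j
  · simp only [h, if_false]; exact measurable_const

lemma abs_ite_u (c : Prop) [Decidable c] (j : Fin k) (a : Fin k × ℝ) :
    |if c then u j a else 1| ≤ 1 + |a.2| := by
  have h0 : (0:ℝ) ≤ |a.2| := abs_nonneg _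
  by_cases h : c
  · simp only [h, if_true]
    unfold u
    by_cases h2 : a.1 = j
    · simp only [h2, if_true]; linarith [le_abs_self a.2, neg_abs_le a.2, abs_abs a.2,
        abs_le_abs (le_refl a.2)]
    · simp only [h2, if_false]; rw [abs_zero]; linarith
  · simp only [h, if_false, abs_one]; linarith

lemma measurable_g2 (p : Fin n × Fin n) (j : Fin k) (m : Fin n) :
    Measurable (g2 p j m) := by
  unfold g2
  exact (measurable_ite_u _ j).mul (measurable_ite_u _ j)

lemma one_le_base (a : Fin k × ℝ) : (1:ℝ) ≤ 1 + |a.2| := by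
  have := abs_nonneg a.2; linarith

lemma g2_abs (p : Fin n × Fin n) (j : Fin k) (m : Fin n) (a : Fin k × ℝ) :
    |g2 p j m a| ≤ (1 + |a.2|)^4 := by
  have hb : (0:ℝ) ≤ 1 + |a.2| := le_trans zero_le_one (one_le_base a)
  have h1 := abs_ite_u (m = p.1) j a
  have h2 := abs_ite_u (m = p.2) j a
  have key : |g2 p j m a| ≤ (1 + |a.2|) * (1 + |a.2|) := by
    unfold g2
    rw [abs_mul]
    exact mul_le_mul h1 h2 (abs_nonneg _) hb
  calc |g2 p j m a| ≤ (1 + |a.2|) * (1 + |a.2|) := key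
    _ = (1 + |a.2|)^2 := by ring
    _ ≤ (1 + |a.2|)^4 := pow_le_pow_right₀ (one_le_base a) (by norm_num)

lemma g2_integrable (p : Fin n × Fin n) (j : Fin k) (m : Fin n) :
    Integrable (g2 p j m) (nu k) :=
  Integrable.mono' integrable_dom (measurable_g2 p j m).aestronglyMeasurable
    (Filter.Eventually.of_forall fun a => by
      rw [Real.norm_eq_abs]; exact g2_abs p j m a)

lemma g4_integrable (p q : Fin n × Fin n) (j1 j2 : Fin k) (m : Fin n) :
    Integrable (g4 p q j1 j2 m) (nu k) := by
  refine Integrable.mono' integrable_dom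
    (((measurable_g2 p j1 m).mul (measurable_g2 q j2 m)).aestronglyMeasurable)
    (Filter.Eventually.of_forall fun a => ?_)
  have hb : (0:ℝ) ≤ 1 + |a.2| := le_trans zero_le_one (one_le_base a)
  have hbb : (0:ℝ) ≤ (1 + |a.2|) * (1 + |a.2|) := mul_nonneg hb hb
  have k1 : |g2 p j1 m a| ≤ (1 + |a.2|) * (1 + |a.2|) := by
    unfold g2; rw [abs_mul]
    exact mul_le_mul (abs_ite_u _ j1 a) (abs_ite_u _ j1 a) (abs_nonneg _) hb
  have k2 : |g2 q j2 m a| ≤ (1 + |a.2|) * (1 + |a.2|) := by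
    unfold g2; rw [abs_mul]
    exact mul_le_mul (abs_ite_u _ j2 a) (abs_ite_u _ j2 a) (abs_nonneg _) hb
  have : |g4 p q j1 j2 m a| ≤ ((1 + |a.2|) * (1 + |a.2|)) * ((1 + |a.2|) * (1 + |a.2|)) := by
    unfold g4; rw [abs_mul]
    exact mul_le_mul k1 k2 (abs_nonneg _) hbb
  rw [Real.norm_eq_abs]
  calc |g4 p q j1 j2 m a| ≤ ((1 + |a.2|) * (1 + |a.2|)) * ((1 + |a.2|) * (1 + |a.2|)) := this
    _ = (1 + |a.2|)^4 := by ring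

noncomputable def T (p q : Fin n × Fin n) (j1 j2 : Fin k) : ℝ :=
  ∏ m, ∫ a, g4 p q j1 j2 m a ∂(nu k)

lemma Wf_integrable (p : Fin n × Fin n) : Integrable (Wf p) (Pm k n) := by
  have h : Wf (k := k) p = fun y => ∑ j, ∏ m, g2 p j m (y m) := by
    funext y; exact Finset.sum_congr rfl fun j _ => (g2_prod p j y).symm
  rw [h]
  exact integrable_finset_sum _ fun j _ => pi_integrable_prod _ fun m => g2_integrable p j m

lemma Wf_integral (p : Fin n × Fin n) (hp : p.1 ≠ p.2) :
    ∫ y, Wf p y ∂(Pm k n) = 0 := by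
  have h : Wf (k := k) p = fun y => ∑ j, ∏ m, g2 p j m (y m) := by
    funext y; exact Finset.sum_congr rfl fun j _ => (g2_prod p j y).symm
  rw [h, integral_finset_sum _ fun j _ => pi_integrable_prod _ fun m => g2_integrable p j m]
  refine Finset.sum_eq_zero fun j _ => ?_
  rw [pi_integral_prod]
  refine Finset.prod_eq_zero (Finset.mem_univ p.1) ?_
  have hg : g2 p j p.1 = fun a => u j a := by
    funext a; unfold g2; rw [if_pos rfl, if_neg hp, mul_one]
  rw [hg, nu_integral_u]

lemma WW_eq (p q : Fin n × Fin n) :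
    (fun y : Fin n → Fin k × ℝ => Wf p y * Wf q y)
      = fun y => ∑ j1, ∑ j2, ∏ m, g4 p q j1 j2 m (y m) := by
  funext y
  rw [Wf, Wf, Finset.sum_mul_sum]
  exact Finset.sum_congr rfl fun j1 _ => Finset.sum_congr rfl fun j2 _ =>
    (g4_prod p q j1 j2 y).symm

lemma WW_integrable (p q : Fin n × Fin n) :
    Integrable (fun y => Wf p y * Wf q y) (Pm k n) := by
  rw [WW_eq]
  exact integrable_finset_sum _ fun j1 _ => integrable_finset_sum _ fun j2 _ =>
    pi_integrable_prod _ fun m => g4_integrable p q j1 j2 m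

lemma WW_integral (p q : Fin n × Fin n) :
    ∫ y, Wf p y * Wf q y ∂(Pm k n) = ∑ j1 : Fin k, ∑ j2 : Fin k, T p q j1 j2 := by
  rw [WW_eq p q]
  rw [integral_finset_sum _ fun j1 _ => integrable_finset_sum _ fun j2 _ =>
    pi_integrable_prod _ fun m => g4_integrable p q j1 j2 m]
  refine Finset.sum_congr rfl fun j1 _ => ?_
  rw [integral_finset_sum _ fun j2 _ => pi_integrable_prod _ fun m => g4_integrable p q j1 j2 m]
  exact Finset.sum_congr rfl fun j2 _ => pi_integral_prod _

lemma T_self (p : Fin n × Fin n) (hp : p.1 ≠ p.2) (j1 j2 : Fin k) :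
    T p p j1 j2
      = (if j1 = j2 then (k:ℝ)⁻¹ else 0) * (if j1 = j2 then (k:ℝ)⁻¹ else 0) := by
  have h : ∀ m, (∫ a, g4 p p j1 j2 m a ∂(nu k))
      = if m = p.1 then (if j1 = j2 then (k:ℝ)⁻¹ else 0)
        else if m = p.2 then (if j1 = j2 then (k:ℝ)⁻¹ else 0) else 1 := by
    intro m
    by_cases h1 : m = p.1
    · have h2 : ¬ m = p.2 := fun h => hp (h1.symm.trans h)
      have hg : g4 p p j1 j2 m = fun a => u j1 a * u j2 a := by
        funext a; unfold g4 g2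
        rw [if_pos h1, if_pos h1, if_neg h2, if_neg h2, mul_one, mul_one]
      rw [hg, nu_integral_uu, if_pos h1]
    · by_cases h2 : m = p.2
      · have hg : g4 p p j1 j2 m = fun a => u j1 a * u j2 a := by
          funext a; unfold g4 g2
          rw [if_neg h1, if_pos h2, if_neg h1, if_pos h2, one_mul, one_mul]
        rw [hg, nu_integral_uu, if_neg h1, if_pos h2]
      · have hg : g4 p p j1 j2 m = fun _ => (1:ℝ) := by
          funext a; unfold g4 g2
          rw [if_neg h1, if_neg h2, if_neg h1, if_neg h2, mul_one, mul_one]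
        rw [hg, if_neg h1, if_neg h2]
        simp
  rw [T, Finset.prod_congr rfl fun m _ => h m, prod_ite_pair p.1 p.2 hp]

lemma T_swap (p : Fin n × Fin n) (hp : p.1 ≠ p.2) (j1 j2 : Fin k) :
    T p p.swap j1 j2
      = (if j1 = j2 then (k:ℝ)⁻¹ else 0) * (if j1 = j2 then (k:ℝ)⁻¹ else 0) := by
  have h : ∀ m, (∫ a, g4 p p.swap j1 j2 m a ∂(nu k))
      = if m = p.1 then (if j1 = j2 then (k:ℝ)⁻¹ else 0)
        else if m = p.2 then (if j1 = j2 then (k:ℝ)⁻¹ else 0) else 1 := by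
    intro m
    by_cases h1 : m = p.1
    · have h2 : ¬ m = p.2 := fun h => hp (h1.symm.trans h)
      have hg : g4 p p.swap j1 j2 m = fun a => u j1 a * u j2 a := by
        funext a; unfold g4 g2
        simp only [Prod.fst_swap, Prod.snd_swap]
        rw [if_pos h1, if_pos h1, if_neg h2, if_neg h2, mul_one, one_mul]
      rw [hg, nu_integral_uu, if_pos h1]
    · by_cases h2 : m = p.2
      · have hg : g4 p p.swap j1 j2 m = fun a => u j1 a * u j2 a := by
          funext a; unfold g4 g2
          simp only [Prod.fst_swap, Prod.snd_swap]
          rw [if_neg h1, if_pos h2, if_pos h2, if_neg h1, one_mul, mul_one]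
        rw [hg, nu_integral_uu, if_neg h1, if_pos h2]
      · have hg : g4 p p.swap j1 j2 m = fun _ => (1:ℝ) := by
          funext a; unfold g4 g2
          simp only [Prod.fst_swap, Prod.snd_swap]
          rw [if_neg h1, if_neg h2, if_neg h2, if_neg h1, mul_one, mul_one]
        rw [hg, if_neg h1, if_neg h2]
        simp
  rw [T, Finset.prod_congr rfl fun m _ => h m, prod_ite_pair p.1 p.2 hp]

lemma T_zero (p q : Fin n × Fin n) (hq : q.1 ≠ q.2)
    (hqp : q ≠ p) (hqs : q ≠ p.swap) (j1 j2 : Fin k) : T p q j1 j2 = 0 := by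
  obtain ⟨m, hm⟩ : ∃ m, g4 p q j1 j2 m = fun a => u j2 a := by
    by_cases h1 : q.1 = p.1
    · have hq2p2 : q.2 ≠ p.2 := fun h => hqp (Prod.ext h1 h)
      have hq2p1 : q.2 ≠ p.1 := fun h => hq ((h1.trans h.symm).symm).symm
      refine ⟨q.2, ?_⟩
      funext a; unfold g4 g2
      rw [if_neg hq2p1, if_neg hq2p2, if_neg (fun h => hq h.symm), if_pos rfl]
      ring
    · by_cases h2 : q.1 = p.2
      · have hq2p1 : q.2 ≠ p.1 := fun h => hqs (Prod.ext h2 h)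
        have hq2p2 : q.2 ≠ p.2 := fun h => hq (h2.trans h.symm)
        refine ⟨q.2, ?_⟩
        funext a; unfold g4 g2
        rw [if_neg hq2p1, if_neg hq2p2, if_neg (fun h => hq h.symm), if_pos rfl]
        ring
      · refine ⟨q.1, ?_⟩
        funext a; unfold g4 g2
        rw [if_neg h1, if_neg h2, if_pos rfl, if_neg hq]
        ring
  rw [T]
  refine Finset.prod_eq_zero (Finset.mem_univ m) ?_
  rw [hm]
  exact nu_integral_u j2

lemma sum_sum_I2 : ∑ j1 : Fin k, ∑ j2 : Fin k,
    ((if j1 = j2 then (k:ℝ)⁻¹ else 0) * (if j1 = j2 then (k:ℝ)⁻¹ else 0)) = (k:ℝ)⁻¹ := by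
  have h : ∀ j1 j2 : Fin k, ((if j1 = j2 then (k:ℝ)⁻¹ else 0) * (if j1 = j2 then (k:ℝ)⁻¹ else 0))
      = if j1 = j2 then (k:ℝ)⁻¹ * (k:ℝ)⁻¹ else 0 := by
    intro j1 j2; by_cases h : j1 = j2 <;> simp [h]
  simp_rw [h, Finset.sum_ite_eq]
  have hk : (k:ℝ) ≠ 0 := by
    have : 0 < k := Fin.pos_iff_nonempty.mpr inferInstance
    exact_mod_cast this.ne'
  simp [Finset.card_univ]
  field_simp

lemma WW_integral_self (p : Fin n × Fin n) (hp : p.1 ≠ p.2) :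
    ∫ y, Wf p y * Wf p y ∂(Pm k n) = (k:ℝ)⁻¹ := by
  rw [WW_integral]
  rw [Finset.sum_congr rfl fun j1 _ => Finset.sum_congr rfl fun j2 _ => T_self p hp j1 j2]
  exact sum_sum_I2

lemma WW_integral_swap (p : Fin n × Fin n) (hp : p.1 ≠ p.2) :
    ∫ y, Wf p y * Wf p.swap y ∂(Pm k n) = (k:ℝ)⁻¹ := by
  rw [WW_integral]
  rw [Finset.sum_congr rfl fun j1 _ => Finset.sum_congr rfl fun j2 _ => T_swap p hp j1 j2]
  exact sum_sum_I2

lemma WW_integral_zero (p q : Fin n × Fin n) (hq : q.1 ≠ q.2)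
    (hqp : q ≠ p) (hqs : q ≠ p.swap) :
    ∫ y, Wf p y * Wf q y ∂(Pm k n) = 0 := by
  rw [WW_integral]
  rw [Finset.sum_congr rfl fun j1 _ => Finset.sum_congr rfl fun j2 _ =>
    T_zero p q hq hqp hqs j1 j2]
  simp

lemma ae_good : ∀ᵐ y ∂(Pm k n), ∀ i, (y i).2 * (y i).2 = 1 := by
  rw [MeasureTheory.ae_all_iff]
  intro i
  rw [ae_iff]
  have hset : {y : Fin n → Fin k × ℝ | ¬ ((y i).2 * (y i).2 = 1)}
      = Set.pi Set.univ (Function.update (fun _ : Fin n => (Set.univ : Set (Fin k × ℝ))) i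
          {a : Fin k × ℝ | ¬ (a.2 * a.2 = 1)}) := by
    have h0 : {y : Fin n → Fin k × ℝ | ¬ ((y i).2 * (y i).2 = 1)}
        = Function.eval i ⁻¹' {a : Fin k × ℝ | ¬ (a.2 * a.2 = 1)} := rfl
    rw [h0, Set.eval_preimage]
  rw [hset, Measure.pi_pi]
  refine Finset.prod_eq_zero (Finset.mem_univ i) ?_
  rw [Function.update_self]
  exact nu_bad

def Rf (x : Fin n → ℝ) (y : Fin n → Fin k × ℝ) : ℝ :=
  ∑ p ∈ Finset.univ.offDiag, (x p.1 * x p.2) * Wf p y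

lemma Q_eq (x : Fin n → ℝ) (hx : ∑ i, x i ^ 2 = 1) (y : Fin n → Fin k × ℝ)
    (hy : ∀ i, (y i).2 * (y i).2 = 1) :
    ∑ j : Fin k, (∑ i, u j (y i) * x i)^2 = 1 + Rf x y := by
  have step1 : ∑ j : Fin k, (∑ i, u j (y i) * x i)^2
      = ∑ i, ∑ i', (x i * x i') * (∑ j : Fin k, u j (y i) * u j (y i')) := by
    simp_rw [sq, Finset.sum_mul_sum]
    rw [Finset.sum_comm]
    refine Finset.sum_congr rfl fun i _ => ?_
    rw [Finset.sum_comm]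
    refine Finset.sum_congr rfl fun i' _ => ?_
    rw [Finset.mul_sum]
    exact Finset.sum_congr rfl fun j _ => by ring
  have step2 : ∑ i, ∑ i', (x i * x i') * (∑ j : Fin k, u j (y i) * u j (y i'))
      = ∑ p ∈ (Finset.univ ×ˢ Finset.univ),
          (x p.1 * x p.2) * (∑ j : Fin k, u j (y p.1) * u j (y p.2)) :=
    (Finset.sum_product' ..).symm
  have step3 := (Finset.sum_filter_add_sum_filter_not
    (Finset.univ ×ˢ Finset.univ) (fun p : Fin n × Fin n => p.1 = p.2)
    (fun p => (x p.1 * x p.2) * (∑ j : Fin k, u j (y p.1) * u j (y p.2)))).symm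
  have hoff : (Finset.univ ×ˢ Finset.univ).filter (fun p : Fin n × Fin n => ¬ p.1 = p.2)
      = Finset.univ.offDiag := by
    ext p; simp [Finset.mem_offDiag]
  have hdiag : ∑ p ∈ (Finset.univ ×ˢ Finset.univ).filter
        (fun p : Fin n × Fin n => p.1 = p.2),
      (x p.1 * x p.2) * (∑ j : Fin k, u j (y p.1) * u j (y p.2)) = 1 := by
    rw [Finset.sum_filter, Finset.sum_product' (f := fun i i' : Fin n => if i = i' then x i * x i' * ∑ j : Fin k, u j (y i) * u j (y i') else 0)]
    have hinner : ∀ i : Fin n,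
        (∑ i' : Fin n, if i = i' then (x i * x i') * (∑ j : Fin k, u j (y i) * u j (y i')) else 0)
          = (x i * x i) * (∑ j : Fin k, u j (y i) * u j (y i)) := by
      intro i; rw [Finset.sum_ite_eq]; simp
    rw [Finset.sum_congr rfl fun i _ => hinner i]
    have h2 : ∀ i, (∑ j : Fin k, u j (y i) * u j (y i)) = 1 := by
      intro i
      have hterm : ∀ j, u j (y i) * u j (y i)
          = if (y i).1 = j then (y i).2 * (y i).2 else 0 := by
        intro j; unfold u; by_cases h : (y i).1 = j <;> simp [h]
      rw [Finset.sum_congr rfl fun j _ => hterm j, Finset.sum_ite_eq]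
      simp [hy i]
    rw [Finset.sum_congr rfl fun i _ => by rw [h2 i, mul_one]]
    have : ∀ i : Fin n, x i * x i = x i ^ 2 := fun i => (sq (x i)).symm
    rw [Finset.sum_congr rfl fun i _ => this i]
    exact hx
  rw [step1, step2, step3, hoff, hdiag]
  rfl

lemma Rf_integrable (x : Fin n → ℝ) : Integrable (Rf x) (Pm k n) :=
  integrable_finset_sum _ fun p _ => (Wf_integrable p).const_mul _

lemma RfRf_eq (x : Fin n → ℝ) : (fun y => Rf x y * Rf x y)
    = fun y : Fin n → Fin k × ℝ => ∑ p ∈ Finset.univ.offDiag, ∑ q ∈ Finset.univ.offDiag,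
        ((x p.1 * x p.2) * (x q.1 * x q.2)) * (Wf p y * Wf q y) := by
  funext y
  unfold Rf
  rw [Finset.sum_mul_sum]
  exact Finset.sum_congr rfl fun p _ => Finset.sum_congr rfl fun q _ => by ring

lemma RfRf_integrable (x : Fin n → ℝ) :
    Integrable (fun y => Rf x y * Rf x y) (Pm k n) := by
  rw [RfRf_eq]
  exact integrable_finset_sum _ fun p _ => integrable_finset_sum _ fun q _ =>
    (WW_integrable p q).const_mul _

lemma Rf_integral (x : Fin n → ℝ) : ∫ y, Rf x y ∂(Pm k n) = 0 := by
  unfold Rf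
  rw [integral_finset_sum _ fun p _ => (Wf_integrable p).const_mul _]
  refine Finset.sum_eq_zero fun p hp => ?_
  rw [integral_const_mul, Wf_integral p (Finset.mem_offDiag.mp hp).2.2, mul_zero]

lemma RfRf_integral (x : Fin n → ℝ) (hx : ∑ i, x i ^ 2 = 1) :
    ∫ y, Rf x y * Rf x y ∂(Pm k n) ≤ 2 / k := by
  rw [RfRf_eq]
  rw [integral_finset_sum _ fun p _ => integrable_finset_sum _ fun q _ =>
    (WW_integrable p q).const_mul _]
  rw [Finset.sum_congr rfl fun p _ => integral_finset_sum _ fun q _ =>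
    (WW_integrable p q).const_mul _]
  rw [Finset.sum_congr rfl fun p _ => Finset.sum_congr rfl fun q _ => integral_const_mul _ _]
  have hinner : ∀ p ∈ Finset.univ.offDiag, ∑ q ∈ Finset.univ.offDiag,
      ((x p.1 * x p.2) * (x q.1 * x q.2)) * (∫ y, Wf p y * Wf q y ∂(Pm k n))
        = 2 * ((x p.1 * x p.2)^2 * (k:ℝ)⁻¹) := by
    intro p hp
    have hp12 : p.1 ≠ p.2 := (Finset.mem_offDiag.mp hp).2.2
    have hpswap : p ≠ p.swap := by
      intro h
      have h2 := congrArg Prod.fst h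
      simp only [Prod.fst_swap] at h2
      exact hp12 h2
    have hsubset : ({p, p.swap} : Finset (Fin n × Fin n)) ⊆ Finset.univ.offDiag := by
      intro q hq
      rcases Finset.mem_insert.mp hq with h | h
      · subst h; exact hp
      · rw [Finset.mem_singleton.mp h]
        exact Finset.mem_offDiag.mpr ⟨Finset.mem_univ _, Finset.mem_univ _, Ne.symm hp12⟩
    rw [← Finset.sum_subset hsubset (fun q hq hq2 => ?_)]
    · rw [Finset.sum_pair hpswap]
      rw [WW_integral_self p hp12, WW_integral_swap p hp12]
      simp only [Prod.fst_swap, Prod.snd_swap]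
      ring
    · have hq12 : q.1 ≠ q.2 := (Finset.mem_offDiag.mp hq).2.2
      have hqp : q ≠ p := fun h => hq2 (by rw [h]; exact Finset.mem_insert_self _ _)
      have hqs : q ≠ p.swap := fun h => hq2 (by rw [h]; simp)
      rw [WW_integral_zero p q hq12 hqp hqs, mul_zero]
  rw [Finset.sum_congr rfl hinner]
  have hk0 : (0:ℝ) ≤ (k:ℝ)⁻¹ := by positivity
  have hbound : ∑ p ∈ Finset.univ.offDiag, (x p.1 * x p.2)^2 ≤ 1 := by
    have hsub : Finset.univ.offDiag ⊆ (Finset.univ ×ˢ Finset.univ : Finset (Fin n × Fin n)) :=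
      fun p _ => Finset.mem_product.mpr ⟨Finset.mem_univ _, Finset.mem_univ _⟩
    have h1 : ∑ p ∈ Finset.univ.offDiag, (x p.1 * x p.2)^2
        ≤ ∑ p ∈ (Finset.univ ×ˢ Finset.univ : Finset (Fin n × Fin n)), (x p.1 * x p.2)^2 :=
      Finset.sum_le_sum_of_subset_of_nonneg hsub (fun p _ _ => sq_nonneg _)
    have h2 : ∑ p ∈ (Finset.univ ×ˢ Finset.univ : Finset (Fin n × Fin n)), (x p.1 * x p.2)^2
        = (∑ i, x i ^ 2) * (∑ i, x i ^ 2) := by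
      rw [Finset.sum_mul_sum, ← Finset.sum_product']
      exact Finset.sum_congr rfl fun p _ => by ring
    rw [h2, hx, mul_one] at h1
    exact h1
  calc ∑ p ∈ Finset.univ.offDiag, 2 * ((x p.1 * x p.2)^2 * (k:ℝ)⁻¹)
      = (2 * (k:ℝ)⁻¹) * ∑ p ∈ Finset.univ.offDiag, (x p.1 * x p.2)^2 := by
        rw [Finset.mul_sum]; exact Finset.sum_congr rfl fun p _ => by ring
    _ ≤ (2 * (k:ℝ)⁻¹) * 1 := by
        refine mul_le_mul_of_nonneg_left hbound (by positivity)
    _ = 2 / k := by rw [mul_one, div_eq_mul_inv]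

lemma main_pi (x : Fin n → ℝ) (hx : ∑ i, x i ^ 2 = 1) :
    ∫ y, (∑ j : Fin k, (∑ i, u j (y i) * x i)^2)^2 ∂(Pm k n) ≤ 1 + 2 / k := by
  have hae : (fun y : Fin n → Fin k × ℝ => (∑ j : Fin k, (∑ i, u j (y i) * x i)^2)^2)
      =ᵐ[Pm k n] fun y => 1 + (2 * Rf x y + Rf x y * Rf x y) := by
    filter_upwards [ae_good] with y hy
    rw [Q_eq x hx y hy]; ring
  rw [integral_congr_ae hae]
  have hsum : Integrable (fun y => 2 * Rf x y + Rf x y * Rf x y) (Pm k n) :=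
    ((Rf_integrable x).const_mul 2).add (RfRf_integrable x)
  rw [integral_add (integrable_const 1) hsum]
  rw [integral_add ((Rf_integrable x).const_mul 2) (RfRf_integrable x)]
  rw [integral_const_mul, Rf_integral, mul_zero, zero_add]
  have h1 : ∫ (_ : Fin n → Fin k × ℝ), (1:ℝ) ∂(Pm k n) = 1 := by simp
  rw [h1]
  exact add_le_add le_rfl (RfRf_integral x hx)

end CS15

open CS15 in
/-- Second moment of count-sketch: there is an absolute constant `C` such that for every
count-sketch matrix `S ∈ ℝ^{k×n}` (one uniform `±1` entry in a uniform row per column,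
independent across columns, encoded by `f i = (h i, σ i)`) and every fixed unit vector
`x ∈ ℝⁿ`, `E[‖Sx‖₂⁴] ≤ 1 + C/k`. -/
theorem stmt_15 :
    ∃ C : ℝ, 0 < C ∧
      ∀ (k n : ℕ) (hk : 0 < k)
        (Ω : Type) (mΩ : MeasurableSpace Ω) (μ : Measure Ω) (_ : IsProbabilityMeasure μ)
        (f : Fin n → Ω → Fin k × ℝ)
        (_hmeas : ∀ i, Measurable (f i))
        (_hindep : iIndepFun f μ)
        (_hlaw : ∀ i, Measure.map (f i) μ =
          (@PMF.uniformOfFintype (Fin k) _ ⟨⟨0, hk⟩⟩).toMeasure.prod signMeasure)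
        (x : Fin n → ℝ), (∑ i : Fin n, x i ^ 2 = 1) →
        ∫ ω, (∑ j : Fin k,
            (∑ i : Fin n, (if (f i ω).1 = j then (f i ω).2 else 0) * x i) ^ 2) ^ 2 ∂μ
          ≤ 1 + C / k := by
  refine ⟨2, by norm_num, ?_⟩
  intro k n hk Ω mΩ μ hμ f hmeas hindep hlaw x hx
  haveI : Nonempty (Fin k) := ⟨⟨0, hk⟩⟩
  have hlaw' : ∀ i, Measure.map (f i) μ = nu k := fun i => hlaw i
  have hF : Measurable (fun ω (i : Fin n) => f i ω) :=
    measurable_pi_lambda _ hmeas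
  have hmap : Measure.map (fun ω (i : Fin n) => f i ω) μ = Pm k n := by
    refine (Measure.pi_eq fun s hs => ?_).symm
    rw [Measure.map_apply hF (MeasurableSet.univ_pi hs)]
    have hpre : (fun ω (i : Fin n) => f i ω) ⁻¹' Set.pi Set.univ s = ⋂ i, f i ⁻¹' s i := by
      ext ω; simp [Set.mem_pi]
    rw [hpre, hindep.meas_iInter fun i => ⟨s i, hs i, rfl⟩]
    refine Finset.prod_congr rfl fun i _ => ?_
    rw [← Measure.map_apply (hmeas i) (hs i), hlaw' i]
  have hφ : Measurable (fun y : Fin n → Fin k × ℝ =>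
      (∑ j : Fin k, (∑ i, u j (y i) * x i)^2)^2) := by
    apply Measurable.pow_const
    apply Finset.measurable_sum
    intro j _
    apply Measurable.pow_const
    apply Finset.measurable_sum
    intro i _
    exact ((measurable_u j).comp (measurable_pi_apply i)).mul_const _
  calc ∫ ω, (∑ j : Fin k,
          (∑ i : Fin n, (if (f i ω).1 = j then (f i ω).2 else 0) * x i) ^ 2) ^ 2 ∂μ
      = ∫ y, (∑ j : Fin k, (∑ i, u j (y i) * x i)^2)^2
          ∂(Measure.map (fun ω (i : Fin n) => f i ω) μ) :=
        (integral_map hF.aemeasurable hφ.aestronglyMeasurable).symm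
    _ = ∫ y, (∑ j : Fin k, (∑ i, u j (y i) * x i)^2)^2 ∂(Pm k n) := by rw [hmap]
    _ ≤ 1 + 2 / k := main_pi x hx
end
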